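/- Let S = (R_i)_{i∈I} be a family of fuzzy relations on U, let P be a fuzzy preorder on U, and let x ∈ L. Then for each k ∈ {1,2,3}: x ≤ SD_{k+3}(S)(P) if and only if x ≤ SD_{k+6}(S)(P); consequently x ≤ SD_k(S)(P) if and only if x ≤ SD_{k+6}(S)(P). -/
import Mathlib


/-- A complete residuated lattice: a complete lattice with a commutative monoid
operation `otimes` whose unit is the top element, distributing over arbitrary
suprema, together with its residuum `res` characterized by the adjunction. -/
class CRL (L : Type*) extends CompleteLattice L where
  /-- the multiplication ⊗ -/
  otimes : L → L → L
  otimes_comm : ∀ a b : L, otimes a b = otimes b a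
  otimes_assoc : ∀ a b c : L, otimes (otimes a b) c = otimes a (otimes b c)
  otimes_top : ∀ a : L, otimes a ⊤ = a
  otimes_sSup : ∀ (a : L) (s : Set L), otimes a (sSup s) = ⨆ b ∈ s, otimes a b
  /-- the residuum → -/
  res : L → L → L
  otimes_le_iff : ∀ a b c : L, otimes a b ≤ c ↔ a ≤ res b c

variable {L : Type*} [CRL L] {U : Type*}

/-- The biresiduum x ↔ y = (x → y) ⊓ (y → x). -/
def bres (a b : L) : L := CRL.res a b ⊓ CRL.res b a

/-- Composition of fuzzy relations: (R ∘ P)(u,v) = ⨆ w, R(u,w) ⊗ P(w,v). -/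
def fcomp (R P : U → U → L) : U → U → L :=
  fun u v => ⨆ w, CRL.otimes (R u w) (P w v)

/-- Inclusion degree of fuzzy relations: R ≲ Q. -/
def incl (R Q : U → U → L) : L := ⨅ u, ⨅ v, CRL.res (R u v) (Q u v)

/-- Equality degree of fuzzy relations: R ≈ Q. -/
def eqd (R Q : U → U → L) : L := ⨅ u, ⨅ v, bres (R u v) (Q u v)

/-- SD_1(S)(X) = ⨅ i, ((X ∘ R_i) ≲ (R_i ∘ X)). -/
def SD1 {I : Type*} (S : I → U → U → L) (X : U → U → L) : L :=
  ⨅ i, incl (fcomp X (S i)) (fcomp (S i) X)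

/-- SD_2(S)(X) = ⨅ i, ((R_i ∘ X) ≲ (X ∘ R_i)). -/
def SD2 {I : Type*} (S : I → U → U → L) (X : U → U → L) : L :=
  ⨅ i, incl (fcomp (S i) X) (fcomp X (S i))

/-- SD_3(S)(X) = SD_1(S)(X) ⊓ SD_2(S)(X). -/
def SD3 {I : Type*} (S : I → U → U → L) (X : U → U → L) : L :=
  SD1 S X ⊓ SD2 S X

/-- The left residual Q / R : (Q / R)(u,v) = ⨅ w, R(v,w) → Q(u,w). -/
def lres (Q R : U → U → L) : U → U → L := fun u v => ⨅ w, CRL.res (R v w) (Q u w)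

/-- The right residual R \\ Q : (R \\ Q)(u,v) = ⨅ w, R(w,u) → Q(w,v). -/
def rres (R Q : U → U → L) : U → U → L := fun u v => ⨅ w, CRL.res (R w u) (Q w v)

/-- A fuzzy preorder: reflexive (P(u,u) = 1 = ⊤) and transitive (P ∘ P ≤ P). -/
def IsFuzzyPreorder (P : U → U → L) : Prop :=
  (∀ u, P u u = ⊤) ∧ fcomp P P ≤ P

/-- SD_4(S)(X) = ⨅ i, ((X ∘ R_i ∘ X) ≈ (R_i ∘ X)). -/
def SD4 {I : Type*} (S : I → U → U → L) (X : U → U → L) : L :=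
  ⨅ i, eqd (fcomp (fcomp X (S i)) X) (fcomp (S i) X)

/-- SD_5(S)(X) = ⨅ i, ((X ∘ R_i ∘ X) ≈ (X ∘ R_i)). -/
def SD5 {I : Type*} (S : I → U → U → L) (X : U → U → L) : L :=
  ⨅ i, eqd (fcomp (fcomp X (S i)) X) (fcomp X (S i))

/-- SD_6(S)(X) = SD_4(S)(X) ⊓ SD_5(S)(X). -/
def SD6 {I : Type*} (S : I → U → U → L) (X : U → U → L) : L :=
  SD4 S X ⊓ SD5 S X

/-- SD_7(S)(X) = (X ≲ ⨅ i, (R_i ∘ X) / (R_i ∘ X)). -/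
def SD7 {I : Type*} (S : I → U → U → L) (X : U → U → L) : L :=
  incl X (⨅ i, lres (fcomp (S i) X) (fcomp (S i) X))

/-- SD_8(S)(X) = (X ≲ ⨅ i, (X ∘ R_i) \\ (X ∘ R_i)). -/
def SD8 {I : Type*} (S : I → U → U → L) (X : U → U → L) : L :=
  incl X (⨅ i, rres (fcomp X (S i)) (fcomp X (S i)))

/-- SD_9(S)(X) = SD_7(S)(X) ⊓ SD_8(S)(X). -/
def SD9 {I : Type*} (S : I → U → U → L) (X : U → U → L) : L :=
  SD7 S X ⊓ SD8 S X


section Aux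
open CRL

variable {L : Type*} [CRL L] {U : Type*}

lemma le_res_iff {a b c : L} : a ≤ CRL.res b c ↔ CRL.otimes a b ≤ c :=
  (CRL.otimes_le_iff a b c).symm

lemma otimes_mono {a b c d : L} (h1 : a ≤ b) (h2 : c ≤ d) :
    CRL.otimes a c ≤ CRL.otimes b d := by
  have hl : ∀ p q r : L, p ≤ q → CRL.otimes p r ≤ CRL.otimes q r := by
    intro p q r h
    exact (CRL.otimes_le_iff p r _).mpr (h.trans ((CRL.otimes_le_iff q r _).mp le_rfl))
  calc CRL.otimes a c ≤ CRL.otimes b c := hl _ _ _ h1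
    _ = CRL.otimes c b := CRL.otimes_comm _ _
    _ ≤ CRL.otimes d b := hl _ _ _ h2
    _ = CRL.otimes b d := CRL.otimes_comm _ _

lemma otimes_iSup {ι : Sort*} (a : L) (f : ι → L) :
    CRL.otimes a (⨆ i, f i) = ⨆ i, CRL.otimes a (f i) := by
  rw [iSup, CRL.otimes_sSup, iSup_range]

lemma iSup_otimes {ι : Sort*} (a : L) (f : ι → L) :
    CRL.otimes (⨆ i, f i) a = ⨆ i, CRL.otimes (f i) a := by
  rw [CRL.otimes_comm, otimes_iSup]
  exact iSup_congr fun i => CRL.otimes_comm _ _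

lemma otimes_le_right (a b : L) : CRL.otimes a b ≤ b := by
  calc CRL.otimes a b ≤ CRL.otimes ⊤ b := otimes_mono le_top le_rfl
    _ = CRL.otimes b ⊤ := CRL.otimes_comm _ _
    _ = b := CRL.otimes_top b

/-- scalar multiplication of a fuzzy relation -/
def smul (x : L) (R : U → U → L) : U → U → L := fun u v => CRL.otimes x (R u v)

lemma smul_le_self (x : L) (R : U → U → L) : smul x R ≤ R :=
  fun u v => otimes_le_right x (R u v)

lemma smul_mono {x : L} {A B : U → U → L} (h : A ≤ B) : smul x A ≤ smul x B :=
  fun u v => otimes_mono le_rfl (h u v)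

lemma fcomp_mono {A B C D : U → U → L} (h1 : A ≤ B) (h2 : C ≤ D) :
    fcomp A C ≤ fcomp B D := fun u v =>
  iSup_mono fun w => otimes_mono (h1 u w) (h2 w v)

lemma fcomp_assoc (A B C : U → U → L) :
    fcomp (fcomp A B) C = fcomp A (fcomp B C) := by
  funext u v
  show (⨆ w, CRL.otimes (⨆ t, CRL.otimes (A u t) (B t w)) (C w v))
      = ⨆ t, CRL.otimes (A u t) (⨆ w, CRL.otimes (B t w) (C w v))
  simp only [iSup_otimes, otimes_iSup, CRL.otimes_assoc]
  exact iSup_comm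

lemma smul_fcomp (x : L) (A B : U → U → L) :
    smul x (fcomp A B) = fcomp (smul x A) B := by
  funext u v
  show CRL.otimes x (⨆ w, CRL.otimes (A u w) (B w v))
      = ⨆ w, CRL.otimes (CRL.otimes x (A u w)) (B w v)
  simp only [otimes_iSup, CRL.otimes_assoc]

lemma fcomp_smul (x : L) (A B : U → U → L) :
    fcomp A (smul x B) = smul x (fcomp A B) := by
  funext u v
  show (⨆ w, CRL.otimes (A u w) (CRL.otimes x (B w v)))
      = CRL.otimes x (⨆ w, CRL.otimes (A u w) (B w v))
  rw [otimes_iSup]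
  refine iSup_congr fun w => ?_
  rw [← CRL.otimes_assoc, CRL.otimes_comm (A u w) x, CRL.otimes_assoc]

lemma le_fcomp_right {P : U → U → L} (hr : ∀ u, P u u = ⊤) (R : U → U → L) :
    R ≤ fcomp R P := by
  intro u v
  calc R u v = CRL.otimes (R u v) ⊤ := (CRL.otimes_top _).symm
    _ = CRL.otimes (R u v) (P v v) := by rw [hr]
    _ ≤ ⨆ w, CRL.otimes (R u w) (P w v) := le_iSup (fun w => CRL.otimes (R u w) (P w v)) v

lemma le_fcomp_left {P : U → U → L} (hr : ∀ u, P u u = ⊤) (R : U → U → L) :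
    R ≤ fcomp P R := by
  intro u v
  calc R u v = CRL.otimes (R u v) ⊤ := (CRL.otimes_top _).symm
    _ = CRL.otimes ⊤ (R u v) := CRL.otimes_comm _ _
    _ = CRL.otimes (P u u) (R u v) := by rw [hr]
    _ ≤ ⨆ w, CRL.otimes (P u w) (R w v) := le_iSup (fun w => CRL.otimes (P u w) (R w v)) u

lemma le_incl_iff {x : L} {A B : U → U → L} : x ≤ incl A B ↔ smul x A ≤ B := by
  simp only [incl, le_iInf_iff, le_res_iff]
  constructor
  · intro h u v; exact h u v
  · intro h u v; exact h u v

lemma le_eqd_iff {x : L} {A B : U → U → L} :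
    x ≤ eqd A B ↔ smul x A ≤ B ∧ smul x B ≤ A := by
  simp only [eqd, bres, le_iInf_iff, le_inf_iff, le_res_iff]
  constructor
  · intro h
    exact ⟨fun u v => (h u v).1, fun u v => (h u v).2⟩
  · intro h u v
    exact ⟨h.1 u v, h.2 u v⟩

lemma smul_fcomp_le_iff {x : L} {A B C : U → U → L} :
    smul x (fcomp A B) ≤ C ↔
      ∀ u w v, CRL.otimes (CRL.otimes x (A u v)) (B v w) ≤ C u w := by
  constructor
  · intro h u w v
    refine le_trans ?_ (h u w)
    show CRL.otimes (CRL.otimes x (A u v)) (B v w)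
        ≤ CRL.otimes x (⨆ t, CRL.otimes (A u t) (B t w))
    rw [CRL.otimes_assoc]
    exact otimes_mono le_rfl (le_iSup (fun t => CRL.otimes (A u t) (B t w)) v)
  · intro h u w
    show CRL.otimes x (⨆ t, CRL.otimes (A u t) (B t w)) ≤ C u w
    rw [otimes_iSup]
    refine iSup_le fun v => ?_
    rw [← CRL.otimes_assoc]
    exact h u w v

lemma le_SD1_iff {I : Type*} {x : L} {S : I → U → U → L} {X : U → U → L} :
    x ≤ SD1 S X ↔ ∀ i, smul x (fcomp X (S i)) ≤ fcomp (S i) X := by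
  simp only [SD1, le_iInf_iff, le_incl_iff]

lemma le_SD2_iff {I : Type*} {x : L} {S : I → U → U → L} {X : U → U → L} :
    x ≤ SD2 S X ↔ ∀ i, smul x (fcomp (S i) X) ≤ fcomp X (S i) := by
  simp only [SD2, le_iInf_iff, le_incl_iff]

lemma le_SD4_iff {I : Type*} {x : L} {S : I → U → U → L} {X : U → U → L} :
    x ≤ SD4 S X ↔ ∀ i, smul x (fcomp (fcomp X (S i)) X) ≤ fcomp (S i) X ∧
      smul x (fcomp (S i) X) ≤ fcomp (fcomp X (S i)) X := by
  simp only [SD4, le_iInf_iff, le_eqd_iff]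

lemma le_SD5_iff {I : Type*} {x : L} {S : I → U → U → L} {X : U → U → L} :
    x ≤ SD5 S X ↔ ∀ i, smul x (fcomp (fcomp X (S i)) X) ≤ fcomp X (S i) ∧
      smul x (fcomp X (S i)) ≤ fcomp (fcomp X (S i)) X := by
  simp only [SD5, le_iInf_iff, le_eqd_iff]

lemma le_SD7_iff {I : Type*} {x : L} {S : I → U → U → L} {X : U → U → L} :
    x ≤ SD7 S X ↔ ∀ i, smul x (fcomp X (fcomp (S i) X)) ≤ fcomp (S i) X := by
  simp only [SD7, le_incl_iff, smul_fcomp_le_iff]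
  constructor
  · intro h i u w v
    have := h u v
    simp only [iInf_apply, le_iInf_iff, lres, le_res_iff] at this
    exact this i w
  · intro h u v
    simp only [iInf_apply, le_iInf_iff, lres, le_res_iff]
    intro i w
    exact h i u w v

lemma le_SD8_iff {I : Type*} {x : L} {S : I → U → U → L} {X : U → U → L} :
    x ≤ SD8 S X ↔ ∀ i, smul x (fcomp (fcomp X (S i)) X) ≤ fcomp X (S i) := by
  have key : ∀ (a b : L), CRL.otimes (CRL.otimes x a) b = CRL.otimes (CRL.otimes x b) a := by
    intro a b
    rw [CRL.otimes_assoc, CRL.otimes_comm a b, CRL.otimes_assoc]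
  simp only [SD8, le_incl_iff, smul_fcomp_le_iff]
  constructor
  · intro h i u w v
    rw [key]
    have := h v w
    simp only [iInf_apply, le_iInf_iff, rres, le_res_iff, smul] at this
    exact this i u
  · intro h u v
    simp only [iInf_apply, le_iInf_iff, rres, le_res_iff, smul]
    intro i w
    rw [key]
    exact h i w v u

end Aux

/-- For a fuzzy preorder P and each k ∈ {1,2,3}:
x ≤ SD_{k+3}(S)(P) iff x ≤ SD_{k+6}(S)(P); consequently
x ≤ SD_k(S)(P) iff x ≤ SD_{k+6}(S)(P). -/
theorem stmt16 [Nonempty U] {I : Type*} (S : I → U → U → L) (P : U → U → L)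
    (hP : IsFuzzyPreorder P) (x : L) :
    ((x ≤ SD4 S P ↔ x ≤ SD7 S P) ∧
      (x ≤ SD5 S P ↔ x ≤ SD8 S P) ∧
      (x ≤ SD6 S P ↔ x ≤ SD9 S P)) ∧
    ((x ≤ SD1 S P ↔ x ≤ SD7 S P) ∧
      (x ≤ SD2 S P ↔ x ≤ SD8 S P) ∧
      (x ≤ SD3 S P ↔ x ≤ SD9 S P)) := by
  obtain ⟨hr, ht⟩ := hP
  have h47 : x ≤ SD4 S P ↔ x ≤ SD7 S P := by
    rw [le_SD4_iff, le_SD7_iff]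
    constructor
    · intro h i
      rw [← fcomp_assoc]
      exact (h i).1
    · intro h i
      refine ⟨by rw [fcomp_assoc]; exact h i, ?_⟩
      calc smul x (fcomp (S i) P) ≤ fcomp (S i) P := smul_le_self _ _
        _ ≤ fcomp P (fcomp (S i) P) := le_fcomp_left hr _
        _ = fcomp (fcomp P (S i)) P := (fcomp_assoc P (S i) P).symm
  have h58 : x ≤ SD5 S P ↔ x ≤ SD8 S P := by
    rw [le_SD5_iff, le_SD8_iff]
    constructor
    · intro h i
      exact (h i).1
    · intro h i
      refine ⟨h i, ?_⟩
      calc smul x (fcomp P (S i)) ≤ fcomp P (S i) := smul_le_self _ _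
        _ ≤ fcomp (fcomp P (S i)) P := le_fcomp_right hr _
  have h17 : x ≤ SD1 S P ↔ x ≤ SD7 S P := by
    rw [le_SD1_iff, le_SD7_iff]
    constructor
    · intro h i
      calc smul x (fcomp P (fcomp (S i) P))
          = smul x (fcomp (fcomp P (S i)) P) := by rw [fcomp_assoc]
        _ = fcomp (smul x (fcomp P (S i))) P := smul_fcomp x _ P
        _ ≤ fcomp (fcomp (S i) P) P := fcomp_mono (h i) le_rfl
        _ = fcomp (S i) (fcomp P P) := fcomp_assoc _ _ _
        _ ≤ fcomp (S i) P := fcomp_mono le_rfl ht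
    · intro h i
      calc smul x (fcomp P (S i))
          ≤ smul x (fcomp (fcomp P (S i)) P) := smul_mono (le_fcomp_right hr _)
        _ = smul x (fcomp P (fcomp (S i) P)) := by rw [fcomp_assoc]
        _ ≤ fcomp (S i) P := h i
  have h28 : x ≤ SD2 S P ↔ x ≤ SD8 S P := by
    rw [le_SD2_iff, le_SD8_iff]
    constructor
    · intro h i
      calc smul x (fcomp (fcomp P (S i)) P)
          = smul x (fcomp P (fcomp (S i) P)) := by rw [fcomp_assoc]
        _ = fcomp P (smul x (fcomp (S i) P)) := (fcomp_smul x P _).symm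
        _ ≤ fcomp P (fcomp P (S i)) := fcomp_mono le_rfl (h i)
        _ = fcomp (fcomp P P) (S i) := (fcomp_assoc _ _ _).symm
        _ ≤ fcomp P (S i) := fcomp_mono ht le_rfl
    · intro h i
      calc smul x (fcomp (S i) P)
          ≤ smul x (fcomp (fcomp P (S i)) P) := smul_mono (fcomp_mono (le_fcomp_left hr (S i)) le_rfl)
        _ ≤ fcomp P (S i) := h i
  refine ⟨⟨h47, h58, ?_⟩, h17, h28, ?_⟩
  · simp only [SD6, SD9, le_inf_iff]
    exact and_congr h47 h58
  · simp only [SD3, SD9, le_inf_iff]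
    exact and_congr h17 h28
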